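/- Let R be a commutative ring, δ ∈ R, and let J(R) be the group of invertible matrices of the form g = [[a, x, z], [δy, b, y], [δ²z, δx, a]] (a, b ∈ R invertible appropriately, x,y,z ∈ R) with determinant a unit. The map Δ : J(R) → R^× × R^× given by Δ(g) = (a − δz, b(a + δz) − 2δxy) is a group homomorphism. -/
import Mathlib


open Matrix

/-- The map `Δ` on matrices centralising `c`, reading off the entries
`(a - δz, b(a + δz) - 2δxy)` of a matrix `[[a,x,z],[δy,b,y],[δ²z,δx,a]]`. -/
def JDelta {R : Type*} [CommRing R] (δ : R) (X : Matrix (Fin 3) (Fin 3) R) : R × R :=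
  (X 0 0 - δ * X 0 2, X 1 1 * (X 0 0 + δ * X 0 2) - 2 * δ * X 0 1 * X 1 2)

lemma centralizer_rels {R : Type*} [CommRing R] (δ : R)
    (X : Matrix (Fin 3) (Fin 3) R)
    (h : X * !![0, 0, 1; 0, δ, 0; δ ^ 2, 0, 0] = !![0, 0, 1; 0, δ, 0; δ ^ 2, 0, 0] * X) :
    X 2 0 = δ ^ 2 * X 0 2 ∧ X 2 1 = δ * X 0 1 ∧ X 2 2 = X 0 0 ∧ X 1 0 = δ * X 1 2 := by
  have h00 := congrFun (congrFun h 0) 0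
  have h01 := congrFun (congrFun h 0) 1
  have h02 := congrFun (congrFun h 0) 2
  have h12 := congrFun (congrFun h 1) 2
  simp [Matrix.mul_apply, Fin.sum_univ_three, Matrix.vecHead, Matrix.vecTail] at h00 h01 h02 h12
  refine ⟨by linear_combination -h00, by linear_combination -h01, by linear_combination -h02,
    by linear_combination h12⟩

theorem JDelta_multiplicative (R : Type*) [CommRing R] (δ : R)
    (c : Matrix (Fin 3) (Fin 3) R) (hc : c = !![0, 0, 1; 0, δ, 0; δ ^ 2, 0, 0])
    (u v : (Matrix (Fin 3) (Fin 3) R)ˣ)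
    (hu : (u : Matrix (Fin 3) (Fin 3) R) * c = c * u)
    (hv : (v : Matrix (Fin 3) (Fin 3) R) * c = c * v) :
    JDelta δ ((u * v : (Matrix (Fin 3) (Fin 3) R)ˣ) : Matrix (Fin 3) (Fin 3) R) =
      (JDelta δ u * JDelta δ v : R × R) := by
  subst hc
  obtain ⟨e1, e2, e3, e4⟩ := centralizer_rels δ (u : Matrix (Fin 3) (Fin 3) R) hu
  obtain ⟨f1, f2, f3, f4⟩ := centralizer_rels δ (v : Matrix (Fin 3) (Fin 3) R) hv
  simp only [JDelta, Units.val_mul, Matrix.mul_apply, Fin.sum_univ_three, Prod.mk_mul_mk,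
    Prod.mk.injEq]
  rw [f1, f2, f3, f4, e4]
  constructor <;> ring
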